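/- arXiv:2304.08860 — 9 statements merged into one kernel-verified Lean document; each statement's English description precedes it below -/
import Mathlib

section
/- Let α_0, ..., α_{n-1} be a twofold set of n-th roots of a ∈ R with pairwise invertible differences, where n is a power of 2. Then for each i < n/2, α_{i+n/2} = -α_i. -/
/-- `α 0, …, α (2^t - 1)` is a twofold set of `2^t`-th roots of `a`:
each `α i` is a `2^t`-th root of `a`, and `i ≡ j (mod 2^(t-k))` implies
`(α i)^(2^k) = (α j)^(2^k)` for every `0 ≤ k ≤ t`. -/
def IsTwofoldSet {R : Type*} [CommRing R] (t : ℕ) (α : ℕ → R) (a : R) : Prop :=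
  (∀ i < 2 ^ t, α i ^ (2 ^ t) = a) ∧
  ∀ k ≤ t, ∀ i < 2 ^ t, ∀ j < 2 ^ t,
    i ≡ j [MOD 2 ^ (t - k)] → α i ^ (2 ^ k) = α j ^ (2 ^ k)

theorem eq_neg_of_sq_eq_sq_of_isUnit_sub {R : Type*} [CommRing R] {x y : R}
    (hsq : y ^ 2 = x ^ 2) (hu : IsUnit (x - y)) : y = -x := by
  have hprod : (x - y) * (x + y) = (x - y) * 0 := by linear_combination -hsq
  linear_combination hu.mul_left_cancel hprod

theorem IsTwofoldSet.sq_add_half {R : Type*} [CommRing R] {t : ℕ} {α : ℕ → R} {a : R}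
    (htw : IsTwofoldSet (t + 1) α a) {i : ℕ} (hi : i + 2 ^ t < 2 ^ (t + 1)) :
    α (i + 2 ^ t) ^ 2 = α i ^ 2 := by
  have hmod : i + 2 ^ t ≡ i [MOD 2 ^ (t + 1 - 1)] := Nat.add_modEq_right
  simpa using htw.2 1 le_add_self _ hi i ((Nat.le_add_right _ _).trans_lt hi) hmod

theorem twofold_opposite {R : Type*} [CommRing R] {t : ℕ} {α : ℕ → R} {a : R}
    (htw : IsTwofoldSet t α a)
    (hinv : ∀ i < 2 ^ t, ∀ j < 2 ^ t, i ≠ j → IsUnit (α i - α j)) :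
    ∀ i < 2 ^ t / 2, α (i + 2 ^ t / 2) = -α i := by
  intro i hi
  obtain _ | t := t
  · simp at hi
  have hhalf : 2 ^ (t + 1) / 2 = 2 ^ t := by rw [pow_succ, Nat.mul_div_cancel _ two_pos]
  rw [hhalf] at hi ⊢
  have hlt : i + 2 ^ t < 2 ^ (t + 1) := by rw [pow_succ]; omega
  refine eq_neg_of_sq_eq_sq_of_isUnit_sub (htw.sq_add_half hlt) ?_
  exact hinv i (by omega) _ hlt (Nat.lt_add_of_pos_right (by positivity)).ne
end

section
/- Let α_0, ..., α_{n-1} be a twofold set of n-th roots of a ∈ R with pairwise invertible differences, n a power of 2 greater than 1. Then the squares α_0², ..., α_{n/2-1}² form a twofold set of (n/2)-th roots of a with pairwise invertible differences. -/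
theorem twofold_squares {R : Type*} [CommRing R] {t : ℕ} (ht : 1 ≤ t)
    {α : ℕ → R} {a : R}
    (htw : IsTwofoldSet t α a)
    (hinv : ∀ i < 2 ^ t, ∀ j < 2 ^ t, i ≠ j → IsUnit (α i - α j)) :
    IsTwofoldSet (t - 1) (fun i => α i ^ 2) a ∧
      ∀ i < 2 ^ (t - 1), ∀ j < 2 ^ (t - 1), i ≠ j →
        IsUnit (α i ^ 2 - α j ^ 2) := by
  obtain ⟨h1, h2⟩ := htw
  have hm : 2 ^ (t - 1) * 2 = 2 ^ t := by
    rw [← pow_succ]; congr 1; omega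
  have hneg : ∀ j < 2 ^ (t - 1), α (j + 2 ^ (t - 1)) = - α j := by
    intro j hj
    have hj2 : j + 2 ^ (t - 1) < 2 ^ t := by omega
    have hjt : j < 2 ^ t := by omega
    have hmod : j ≡ j + 2 ^ (t - 1) [MOD 2 ^ (t - 1)] := by
      exact (Nat.modEq_iff_dvd' (by omega)).2 ⟨1, by omega⟩
    have heq : α j ^ 2 = α (j + 2 ^ (t - 1)) ^ 2 := by
      have := h2 1 ht j hjt (j + 2 ^ (t - 1)) hj2 hmod
      simpa using this
    have hu := hinv j hjt (j + 2 ^ (t - 1)) hj2 (by omega)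
    have hz : (α j - α (j + 2 ^ (t - 1))) * (α j + α (j + 2 ^ (t - 1))) = 0 := by
      linear_combination heq
    have h0 : α j + α (j + 2 ^ (t - 1)) = 0 :=
      (IsUnit.mul_right_eq_zero hu).mp hz
    linear_combination h0
  refine ⟨⟨?_, ?_⟩, ?_⟩
  · intro i hi
    have hit : i < 2 ^ t := by omega
    have := h1 i hit
    simp only
    rw [← pow_mul, show 2 * 2 ^ (t - 1) = 2 ^ t from by omega]
    exact this
  · intro k hk i hi j hj hmod
    have hkt : k + 1 ≤ t := by omega
    have hmod' : i ≡ j [MOD 2 ^ (t - (k + 1))] := by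
      rwa [show t - (k + 1) = t - 1 - k from by omega]
    have := h2 (k + 1) hkt i (by omega) j (by omega) hmod'
    simp only
    rw [← pow_mul, ← pow_mul, show 2 * 2 ^ k = 2 ^ (k + 1) from by rw [pow_succ]; ring]
    exact this
  · intro i hi j hj hne
    have hit : i < 2 ^ t := by omega
    have hjt : j < 2 ^ t := by omega
    have hd := hinv i hit j hjt hne
    have hd2 := hinv i hit (j + 2 ^ (t - 1)) (by omega) (by omega)
    have key : α i ^ 2 - α j ^ 2 = (α i - α j) * (α i - α (j + 2 ^ (t - 1))) := by
      rw [hneg j hj]; ring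
    rw [key]
    exact hd.mul hd2
end

section
/- If m is not a power of a prime and there exists a twofold set of n-th roots of a in ℤ_m (n a power of 2, n > 1), then there exists a twofold set of n-th roots of a in ℤ_m in which no pairwise difference is invertible. -/
theorem Nat.exists_coprime_factors_of_not_prime_pow {m : ℕ} (hm : m ≠ 0)
    (h : ¬ ∃ p k : ℕ, p.Prime ∧ m = p ^ k) :
    ∃ d₁ d₂ : ℕ, d₁.Coprime d₂ ∧ d₁ * d₂ = m ∧ 1 < d₁ ∧ 1 < d₂ := by
  have hm₁ : m ≠ 1 := fun h₁ => h ⟨2, 0, Nat.prime_two, by simp [h₁]⟩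
  obtain ⟨p, hp, hpm⟩ := Nat.exists_prime_and_dvd hm₁
  refine ⟨ordProj[p] m, ordCompl[p] m, (Nat.coprime_ordCompl hp hm).pow_left _,
    Nat.ordProj_mul_ordCompl_eq_self m p,
    Nat.one_lt_pow (hp.factorization_pos_of_dvd hm hpm).ne' hp.one_lt, ?_⟩
  have hcompl : ordCompl[p] m ≠ 1 := fun h₁ =>
    h ⟨p, m.factorization p, hp,
      (Nat.ordProj_mul_ordCompl_eq_self m p).symm.trans (by rw [h₁, mul_one])⟩
  have := Nat.ordCompl_pos p hm
  omega

section TwofoldSet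

variable {R S : Type*} [CommRing R] [CommRing S] {t : ℕ}

theorem IsTwofoldSet.map {α : ℕ → R} {a : R} (h : IsTwofoldSet t α a) (f : R →+* S) :
    IsTwofoldSet t (f ∘ α) (f a) :=
  ⟨fun i hi => by simp [← map_pow, h.1 i hi],
    fun k hk i hi j hj hij => by simp [← map_pow, h.2 k hk i hi j hj hij]⟩

theorem IsTwofoldSet.prod_mk_snd_const {α : ℕ → R × S} {a : R × S}
    (h : IsTwofoldSet t α a) :
    IsTwofoldSet t (fun i => ((α i).1, (α 0).2)) a := by
  refine ⟨fun i hi => ?_, fun k hk i hi j hj hij => ?_⟩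
  · rw [Prod.pow_mk, ← Prod.pow_fst, ← Prod.pow_snd, h.1 i hi, h.1 0 (Nat.two_pow_pos t)]
  · rw [Prod.pow_mk, Prod.pow_mk, ← Prod.pow_fst, ← Prod.pow_fst, h.2 k hk i hi j hj hij]

end TwofoldSet

theorem Prod.not_isUnit_sub_of_snd_eq {R S : Type*} [Ring R] [Ring S] [Nontrivial S]
    {x y : R × S} (h : x.2 = y.2) : ¬ IsUnit (x - y) := fun hu => by
  simpa [h] using hu.map (RingHom.snd R S)

theorem twofold_without_invertible_differences_general {m : ℕ} (hm : 2 ≤ m)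
    (hnotpp : ¬ ∃ p k : ℕ, p.Prime ∧ m = p ^ k)
    {t : ℕ} {a : ZMod m} {α : ℕ → ZMod m}
    (htw : IsTwofoldSet t α a) :
    ∃ α' : ℕ → ZMod m, IsTwofoldSet t α' a ∧
      ∀ i < 2 ^ t, ∀ j < 2 ^ t, i ≠ j → ¬ IsUnit (α' i - α' j) := by
  obtain ⟨d₁, d₂, hcop, hmul, -, hd₂⟩ :=
    Nat.exists_coprime_factors_of_not_prime_pow (by omega) hnotpp
  have : Fact (1 < d₂) := ⟨hd₂⟩
  let e : ZMod m ≃+* ZMod d₁ × ZMod d₂ :=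
    (ZMod.ringEquivCongr hmul.symm).trans (ZMod.chineseRemainder hcop)
  set β : ℕ → ZMod d₁ × ZMod d₂ := fun i => ((e (α i)).1, (e (α 0)).2)
  have hβ : IsTwofoldSet t β (e a) := (htw.map e.toRingHom).prod_mk_snd_const
  refine ⟨e.symm ∘ β, by simpa using hβ.map e.symm.toRingHom, fun i _ j _ _ hu => ?_⟩
  exact Prod.not_isUnit_sub_of_snd_eq (x := β i) (y := β j) rfl (by simpa using hu.map e)

theorem twofold_without_invertible_differences {m : ℕ} (hm : 2 ≤ m)
    (hnotpp : ¬ ∃ p k : ℕ, p.Prime ∧ m = p ^ k)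
    {t : ℕ} (ht : 1 ≤ t) {a : ZMod m} {α : ℕ → ZMod m}
    (htw : IsTwofoldSet t α a) :
    ∃ α' : ℕ → ZMod m, IsTwofoldSet t α' a ∧
      ∀ i < 2 ^ t, ∀ j < 2 ^ t, i ≠ j → ¬ IsUnit (α' i - α' j) :=
  twofold_without_invertible_differences_general hm hnotpp htw
end

section
/- Let p be an odd prime and α_0, ..., α_{n-1} be n pairwise distinct n-th roots of a in ℤ_{p^e}, with a a unit. Then α_i - α_j is invertible in ℤ_{p^e} for all i ≠ j. -/
theorem roots_invertible_differences_prime_power {p : ℕ} (hp : p.Prime)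
    (hodd : Odd p) {e : ℕ} (he : 1 ≤ e) {t n : ℕ} (hn : n = 2 ^ t)
    {a : ZMod (p ^ e)} (ha : IsUnit a)
    (α : Fin n → ZMod (p ^ e)) (hroots : ∀ i, α i ^ n = a)
    (hdist : Function.Injective α) :
    ∀ i j : Fin n, i ≠ j → IsUnit (α i - α j) := by
  haveI : Fact p.Prime := ⟨hp⟩
  haveI : NeZero (p ^ e) := ⟨pow_ne_zero e hp.ne_zero⟩
  have hpe : (p : ℕ) ∣ p ^ e := dvd_pow_self p (by omega)
  set f : ZMod (p ^ e) →+* ZMod p := ZMod.castHom hpe (ZMod p) with hf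
  -- unit iff nonzero mod p
  have hunit : ∀ x : ZMod (p ^ e), IsUnit x ↔ f x ≠ 0 := by
    intro x
    constructor
    · intro h hx
      have h2 := h.map f
      rw [hx] at h2
      exact (by simp : ¬ IsUnit (0 : ZMod p)) h2
    · intro h
      have hx : x = ((x.val : ℕ) : ZMod (p ^ e)) := by
        simp [ZMod.natCast_val, ZMod.cast_id]
      have hfx : f x = ((x.val : ℕ) : ZMod p) := by
        simp [hf, ZMod.castHom_apply, ZMod.natCast_val]
      rw [hfx, Ne, ZMod.natCast_eq_zero_iff] at h
      rw [hx, ZMod.isUnit_iff_coprime]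
      exact Nat.Coprime.pow_right e ((hp.coprime_iff_not_dvd.mpr h).symm)
  intro i j hij
  by_contra hnd
  have hd0 : f (α i - α j) = 0 := by
    by_contra h0
    exact hnd ((hunit _).mpr h0)
  have hfij : f (α i) = f (α j) := sub_eq_zero.mp (by rw [← map_sub]; exact hd0)
  have hnpos : 0 < n := by rw [hn]; positivity
  -- α i is a unit
  have hαu : IsUnit (α i) := by
    have h1 : IsUnit (α i ^ n) := by rw [hroots i]; exact ha
    exact (isUnit_pow_iff hnpos.ne').mp h1
  have hfα : f (α i) ≠ 0 := (hunit _).mp hαu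
  -- geometric sum factorization
  set S : ZMod (p ^ e) := ∑ k ∈ Finset.range n, α i ^ k * α j ^ (n - 1 - k) with hS
  have hfac : S * (α i - α j) = 0 := by
    rw [hS, geom_sum₂_mul, hroots i, hroots j, sub_self]
  -- S is a unit: f S = n * f(α i)^(n-1) ≠ 0
  have hfS : f S = (n : ZMod p) * f (α i) ^ (n - 1) := by
    rw [hS, map_sum]
    have : ∀ k ∈ Finset.range n, f (α i ^ k * α j ^ (n - 1 - k)) = f (α i) ^ (n - 1) := by
      intro k hk
      rw [Finset.mem_range] at hk
      rw [map_mul, map_pow, map_pow, ← hfij, ← pow_add]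
      congr 1
      omega
    rw [Finset.sum_congr rfl this, Finset.sum_const, Finset.card_range, nsmul_eq_mul]
  have hn0 : (n : ZMod p) ≠ 0 := by
    rw [Ne, ZMod.natCast_eq_zero_iff, hn]
    intro hdvd
    have h2 := hp.dvd_of_dvd_pow hdvd
    have h3 := (Nat.prime_dvd_prime_iff_eq hp Nat.prime_two).mp h2
    rw [Nat.odd_iff] at hodd
    omega
  have hfSne : f S ≠ 0 := by
    rw [hfS]
    exact mul_ne_zero hn0 (pow_ne_zero _ hfα)
  have hSu : IsUnit S := (hunit _).mpr hfSne
  have : α i - α j = 0 := (IsUnit.mul_right_eq_zero hSu).mp hfac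
  exact hij (hdist (sub_eq_zero.mp this))
end

section
/- Let α_0, ..., α_{n-1} be n distinct n-th roots of a in ℤ_m such that all pairwise differences α_i - α_j (i ≠ j) are invertible, where m is squarefree or general. Then each α_i is invertible in ℤ_m. -/
theorem roots_with_invertible_differences_are_units
    {m : ℕ} (hm : 2 ≤ m) {t n : ℕ} (hn : n = 2 ^ t) (hn2 : 2 ≤ n)
    (a : ZMod m) (α : Fin n → ZMod m) (hroots : ∀ i, α i ^ n = a)
    (hinv : ∀ i j : Fin n, i ≠ j → IsUnit (α i - α j)) :
    ∀ i, IsUnit (α i) := by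
  intro i
  by_contra hiu
  have hm1 : m ≠ 1 := by omega
  have hmpos : 0 < m := by omega
  haveI : NeZero m := ⟨by omega⟩
  -- gcd of (α i).val and m is not 1
  have hgcd : Nat.gcd (α i).val m ≠ 1 := by
    intro h
    apply hiu
    have := (ZMod.isUnit_iff_coprime (α i).val m).mpr h
    rwa [ZMod.natCast_val, ZMod.cast_id] at this
  obtain ⟨p, hp, hpd⟩ := Nat.exists_prime_and_dvd hgcd
  have hpm : p ∣ m := hpd.trans (Nat.gcd_dvd_right _ _)
  have hpi : p ∣ (α i).val := hpd.trans (Nat.gcd_dvd_left _ _)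
  haveI : Fact p.Prime := ⟨hp⟩
  let f : ZMod m →+* ZMod p := ZMod.castHom hpm (ZMod p)
  have hfi : f (α i) = 0 := by
    have : f (α i) = ((α i).val : ZMod p) := by
      simp [f, ZMod.castHom_apply, ← ZMod.natCast_val]
    rw [this, ZMod.natCast_eq_zero_iff]
    exact hpi
  -- pick j ≠ i
  have hnpos : 0 < n := by omega
  obtain ⟨j, hj⟩ : ∃ j : Fin n, j ≠ i := by
    haveI : Nontrivial (Fin n) := Fin.nontrivial_iff_two_le.mpr hn2
    exact exists_ne i
  have hfj : f (α j) = 0 := by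
    have h1 : f (α j) ^ n = f (α i) ^ n := by
      rw [← map_pow, ← map_pow, hroots, hroots]
    rw [hfi, zero_pow (by omega)] at h1
    exact pow_eq_zero_iff (by omega : n ≠ 0) |>.mp h1
  have hu : IsUnit (f (α j) - f (α i)) := by
    have := (hinv j i hj).map f
    rwa [map_sub] at this
  rw [hfj, hfi, sub_zero] at hu
  exact hu.ne_zero rfl
end

section
/- Let a ∈ ℤ_m. A set α_0, ..., α_{n-1} ∈ ℤ_m consists of n-th roots of a with pairwise invertible differences if and only if there exist an invertible n-th root α of a and n-th roots of unity ω_0, ..., ω_{n-1} with pairwise invertible differences such that α_i = α·ω_i for all i. -/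
lemma unit_of_pow_eq_pow {m : ℕ} (hm : 2 ≤ m) {n : ℕ} (hn : 1 ≤ n)
    (x y : ZMod m) (h : x ^ n = y ^ n) (hu : IsUnit (x - y)) : IsUnit x := by
  haveI : NeZero m := ⟨by omega⟩
  by_contra hx
  rw [show x = ((x.val : ℕ) : ZMod m) from (ZMod.natCast_rightInverse x).symm,
    ZMod.isUnit_iff_coprime] at hx
  obtain ⟨p, hp, hpx, hpm⟩ := Nat.Prime.not_coprime_iff_dvd.mp hx
  haveI : Fact p.Prime := ⟨hp⟩
  let f := ZMod.castHom hpm (ZMod p)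
  have hfx : f x = 0 := by
    have : f x = ((x.val : ℕ) : ZMod p) := by
      rw [ZMod.castHom_apply, ← ZMod.natCast_val]
    rw [this, ZMod.natCast_eq_zero_iff]
    exact hpx
  have hfy : f y = 0 := by
    have : (f y) ^ n = 0 := by
      rw [← map_pow, ← h, map_pow, hfx, zero_pow (by omega)]
    exact pow_eq_zero_iff (by omega) |>.mp this
  have : IsUnit (f (x - y)) := hu.map f
  rw [map_sub, hfx, hfy, sub_zero] at this
  exact this.ne_zero rfl

theorem roots_of_a_iff_root_times_roots_of_unity
    {m : ℕ} (hm : 2 ≤ m) {t n : ℕ} (hn : n = 2 ^ t) (hn2 : 2 ≤ n)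
    (a : ZMod m) (α : Fin n → ZMod m) :
    ((∀ i, α i ^ n = a) ∧ (∀ i j : Fin n, i ≠ j → IsUnit (α i - α j))) ↔
      ∃ (β : ZMod m) (ω : Fin n → ZMod m),
        IsUnit β ∧ β ^ n = a ∧ (∀ i, ω i ^ n = 1) ∧
        (∀ i j : Fin n, i ≠ j → IsUnit (ω i - ω j)) ∧
        (∀ i, α i = β * ω i) := by
  constructor
  · rintro ⟨hpow, hdiff⟩
    have h01 : (⟨0, by omega⟩ : Fin n) ≠ ⟨1, by omega⟩ := by
      simp [Fin.ext_iff]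
    have hβ : IsUnit (α ⟨0, by omega⟩) :=
      unit_of_pow_eq_pow hm (n := n) (by omega) _ (α ⟨1, by omega⟩)
        (by rw [hpow, hpow]) (hdiff _ _ h01)
    obtain ⟨u, hu⟩ := hβ
    refine ⟨α ⟨0, by omega⟩, fun i => (↑u⁻¹ : ZMod m) * α i, ⟨u, hu⟩,
      hpow _, fun i => ?_, fun i j hij => ?_, fun i => ?_⟩
    · rw [mul_pow, hpow, ← hpow ⟨0, by omega⟩, ← hu, ← mul_pow]
      simp
    · rw [← mul_sub]
      exact (IsUnit.mul (by simp) (hdiff i j hij))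
    · rw [← hu, ← mul_assoc]
      simp
  · rintro ⟨β, ω, hβ, hβn, hω1, hωd, hαω⟩
    refine ⟨fun i => by rw [hαω, mul_pow, hω1, mul_one, hβn],
      fun i j hij => ?_⟩
    rw [hαω, hαω, ← mul_sub]
    exact hβ.mul (hωd i j hij)
end

section
/- Let a be a unit in ℤ_m, α an n-th root of a, and ω an n-th root of unity of order n whose powers ω^0, ..., ω^{n-1} have pairwise invertible differences, with n a power of 2. Then the set α_i := α·ω^i is a twofold set of n-th roots of a with pairwise invertible differences. -/
theorem alphaOmega_set_is_twofold_with_invertible_differences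
    {m : ℕ} (hm : 2 ≤ m) {t : ℕ}
    {a α ω : ZMod m} (ha : IsUnit a) (hα : α ^ (2 ^ t) = a)
    (hω : orderOf ω = 2 ^ t)
    (hωdiff : ∀ i < 2 ^ t, ∀ j < 2 ^ t, i ≠ j → IsUnit (ω ^ i - ω ^ j)) :
    IsTwofoldSet t (fun i => α * ω ^ i) a ∧
      ∀ i < 2 ^ t, ∀ j < 2 ^ t, i ≠ j →
        IsUnit (α * ω ^ i - α * ω ^ j) := by
  have hωone : ω ^ (2 ^ t) = 1 := by rw [← hω]; exact pow_orderOf_eq_one ω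
  refine ⟨⟨fun i _ => ?_, fun k hk i _ j _ hij => ?_⟩, fun i hi j hj hne => ?_⟩
  · rw [mul_pow, ← pow_mul, mul_comm i, pow_mul, hωone, one_pow, mul_one, hα]
  · have : i * 2 ^ k ≡ j * 2 ^ k [MOD 2 ^ (t - k) * 2 ^ k] := hij.mul_right' _
    rw [← pow_add, Nat.sub_add_cancel hk] at this
    rw [mul_pow, mul_pow, ← pow_mul, ← pow_mul]
    congr 1
    rw [← pow_mod_orderOf ω (i * 2 ^ k), ← pow_mod_orderOf ω (j * 2 ^ k), hω]
    exact congrArg (ω ^ ·) this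
  · have hαu : IsUnit α := by
      have : IsUnit (α ^ (2 ^ t)) := hα ▸ ha
      exact (isUnit_pow_iff (by positivity)).1 this
    rw [← mul_sub]
    exact hαu.mul (hωdiff i hi j hj hne)
end

section
/- Let p be an odd prime and α_0, ..., α_{n-1} a set of n-th roots of a in ℤ_{p^e} with pairwise invertible differences, where n is a power of 2 dividing p - 1. Then after some reordering the set is an (α,ω)-set: there exist an n-th root α of a and a root of unity ω of order n such that the reordered set is {α·ω^i : 0 ≤ i < n}. -/
/-!
`ZMod (p ^ e)` is a local ring and, for odd `p`, its unit group is cyclic. In a local ring, two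
`n`-th roots of `a` with invertible difference are units, so for `n ≥ 2` the ratios `α i / α 0`
are `n` distinct `n`-th roots of unity. In a cyclic group the `n`-th roots of unity form a cyclic
group whose order divides `n`; here it is therefore exactly `n`, and a generator `ω` writes every
`α i` as `α 0 * ω ^ k` with `k` running over `0, …, n - 1`.
-/

open Function

theorem IsLocalRing.isUnit_of_pow_eq_pow_of_isUnit_sub {R : Type*} [CommRing R] [IsLocalRing R]
    {n : ℕ} (hn : n ≠ 0) {x y : R} (hxy : x ^ n = y ^ n) (h : IsUnit (x - y)) : IsUnit x := by
  by_contra hx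
  have hy : ¬IsUnit y := by rwa [← isUnit_pow_iff hn, ← hxy, isUnit_pow_iff hn]
  exact nonunits_add hx (mt (IsUnit.neg_iff y).mp hy) (sub_eq_add_neg x y ▸ h)

theorem ZMod.isLocalRing_prime_pow {p : ℕ} [Fact p.Prime] {e : ℕ} (he : e ≠ 0) :
    IsLocalRing (ZMod (p ^ e)) :=
  have : Nontrivial (ZMod (p ^ e)) :=
    ZMod.nontrivial_iff.mpr (Nat.pow_eq_one.not.mpr (by simp [he, (Fact.out : p.Prime).ne_one]))
  IsLocalRing.of_surjective' (PadicInt.toZModPow e) (ZMod.ringHom_surjective _)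

theorem card_rootsOfUnity_dvd_of_isCyclic {M : Type*} [CommMonoid M] [IsCyclic Mˣ] (n : ℕ) :
    Nat.card (rootsOfUnity n M) ∣ n := by
  rw [← IsCyclic.exponent_eq_card]
  exact Monoid.exponent_dvd_of_forall_pow_eq_one fun g ↦ OneMemClass.coe_eq_one.mp g.prop

theorem IsCyclic.exists_perm_eq_pow_of_injective {G : Type*} [Group G] [Finite G] [IsCyclic G]
    {n : ℕ} (hG : Nat.card G ≤ n) (w : Fin n → G) (hw : Injective w) :
    ∃ (σ : Equiv.Perm (Fin n)) (g : G), orderOf g = n ∧ ∀ i, w (σ i) = g ^ (i : ℕ) := by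
  have hcard : Nat.card G = n := le_antisymm hG (by simpa using Nat.card_le_card_of_injective w hw)
  obtain ⟨g, hg⟩ := IsCyclic.exists_ofOrder_eq_natCard (α := G)
  rw [hcard] at hg
  have hpow : Bijective fun k : Fin n ↦ g ^ (k : ℕ) := by
    refine (Nat.bijective_iff_injective_and_card _).mpr ⟨fun i j hij ↦ ?_, by simp [hcard]⟩
    exact Fin.ext (pow_injOn_Iio_orderOf (by simp [hg]) (by simp [hg]) hij)
  have hw' : Bijective w := (Nat.bijective_iff_injective_and_card w).mpr ⟨hw, by simp [hcard]⟩
  exact ⟨(Equiv.ofBijective _ hpow).trans (Equiv.ofBijective w hw').symm, g, hg,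
    fun i ↦ (Equiv.ofBijective w hw').apply_symm_apply _⟩

theorem exists_perm_eq_mul_pow_of_isUnit {R : Type*} [CommRing R] [Nontrivial R] [Finite Rˣ]
    [IsCyclic Rˣ] {n : ℕ} (hn : n ≠ 0) {a : R} (α : Fin n → R) (hroots : ∀ i, α i ^ n = a)
    (hinv : ∀ i j : Fin n, i ≠ j → IsUnit (α i - α j)) (hu : ∀ i, IsUnit (α i)) :
    ∃ (σ : Equiv.Perm (Fin n)) (β ω : R),
      β ^ n = a ∧ orderOf ω = n ∧
      (∀ i j : ℕ, i < n → j < n → i ≠ j → IsUnit (ω ^ i - ω ^ j)) ∧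
      ∀ i : Fin n, α (σ i) = β * ω ^ (i : ℕ) := by
  let i₀ : Fin n := ⟨0, Nat.pos_of_ne_zero hn⟩
  let w : Fin n → rootsOfUnity n R := fun i ↦
    ⟨(hu i).unit * (hu i₀).unit⁻¹, by
      rw [mem_rootsOfUnity, mul_pow, inv_pow, mul_inv_eq_one, Units.ext_iff]
      simp [hroots]⟩
  have hw : Injective w := by
    intro i j hij
    by_contra hne
    have : α i = α j := by simpa [w, Units.ext_iff] using hij
    exact not_isUnit_zero (sub_eq_zero.mpr this ▸ hinv i j hne)
  obtain ⟨σ, g, hg, hσ⟩ := IsCyclic.exists_perm_eq_pow_of_injective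
    (Nat.le_of_dvd (Nat.pos_of_ne_zero hn) (card_rootsOfUnity_dvd_of_isCyclic n)) w hw
  set ω : R := ((g : Rˣ) : R)
  have hα : ∀ i, α (σ i) = α i₀ * ω ^ (i : ℕ) := by
    intro i
    have hunit : (hu (σ i)).unit = (hu i₀).unit * (g : Rˣ) ^ (i : ℕ) := by
      rw [← Subgroup.coe_pow, ← hσ i, mul_comm]
      exact (inv_mul_cancel_right _ _).symm
    simpa [ω] using congrArg Units.val hunit
  refine ⟨σ, α i₀, ω, hroots i₀, by rw [orderOf_units, Subgroup.orderOf_coe, hg], ?_, hα⟩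
  intro i j hi hj hij
  have hne : σ ⟨i, hi⟩ ≠ σ ⟨j, hj⟩ := fun h ↦ hij (congrArg Fin.val (σ.injective h))
  have := hinv _ _ hne
  rw [hα, hα, ← mul_sub] at this
  exact isUnit_of_mul_isUnit_right this

theorem IsLocalRing.exists_perm_eq_mul_pow {R : Type*} [CommRing R] [IsLocalRing R] [Finite Rˣ]
    [IsCyclic Rˣ] {n : ℕ} (hn : n ≠ 0) {a : R} (α : Fin n → R) (hroots : ∀ i, α i ^ n = a)
    (hinv : ∀ i j : Fin n, i ≠ j → IsUnit (α i - α j)) :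
    ∃ (σ : Equiv.Perm (Fin n)) (β ω : R),
      β ^ n = a ∧ orderOf ω = n ∧
      (∀ i j : ℕ, i < n → j < n → i ≠ j → IsUnit (ω ^ i - ω ^ j)) ∧
      ∀ i : Fin n, α (σ i) = β * ω ^ (i : ℕ) := by
  obtain rfl | hn₂ := eq_or_ne n 1
  -- here `α 0` need not be a unit, so the argument below does not apply
  · refine ⟨1, α 0, 1, hroots 0, orderOf_one, by omega, fun i ↦ ?_⟩
    simp [Subsingleton.elim i 0]
  have : Nontrivial (Fin n) := Fin.nontrivial_iff_two_le.mpr (by omega)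
  refine exists_perm_eq_mul_pow_of_isUnit hn α hroots hinv fun i ↦ ?_
  obtain ⟨j, hj⟩ := exists_ne i
  exact isUnit_of_pow_eq_pow_of_isUnit_sub hn ((hroots i).trans (hroots j).symm) (hinv i j hj.symm)

theorem roots_prime_power_are_alphaOmega_set_general
    {p : ℕ} (hp : p.Prime) (hodd : Odd p) {e : ℕ} (he : 1 ≤ e)
    {t n : ℕ} (hn : n = 2 ^ t)
    {a : ZMod (p ^ e)} (α : Fin n → ZMod (p ^ e))
    (hroots : ∀ i, α i ^ n = a)
    (hinv : ∀ i j : Fin n, i ≠ j → IsUnit (α i - α j)) :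
    ∃ (σ : Equiv.Perm (Fin n)) (β ω : ZMod (p ^ e)),
      β ^ n = a ∧ orderOf ω = n ∧
      (∀ i j : ℕ, i < n → j < n → i ≠ j → IsUnit (ω ^ i - ω ^ j)) ∧
      ∀ i : Fin n, α (σ i) = β * ω ^ (i : ℕ) := by
  have : Fact p.Prime := ⟨hp⟩
  have := ZMod.isLocalRing_prime_pow (p := p) (by omega : e ≠ 0)
  have hp₂ : p ≠ 2 := by rintro rfl; exact Nat.not_odd_iff_even.mpr even_two hodd
  have := ZMod.isCyclic_units_of_prime_pow p hp hp₂ e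
  exact IsLocalRing.exists_perm_eq_mul_pow (by simp [hn]) α hroots hinv

theorem roots_prime_power_are_alphaOmega_set
    {p : ℕ} (hp : p.Prime) (hodd : Odd p) {e : ℕ} (he : 1 ≤ e)
    {t n : ℕ} (hn : n = 2 ^ t) (hnp : n ∣ p - 1)
    {a : ZMod (p ^ e)} (α : Fin n → ZMod (p ^ e))
    (hroots : ∀ i, α i ^ n = a)
    (hinv : ∀ i j : Fin n, i ≠ j → IsUnit (α i - α j)) :
    ∃ (σ : Equiv.Perm (Fin n)) (β ω : ZMod (p ^ e)),
      β ^ n = a ∧ orderOf ω = n ∧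
      (∀ i j : ℕ, i < n → j < n → i ≠ j → IsUnit (ω ^ i - ω ^ j)) ∧
      ∀ i : Fin n, α (σ i) = β * ω ^ (i : ℕ) :=
  roots_prime_power_are_alphaOmega_set_general hp hodd he hn α hroots hinv
end

section
/- Let n ≥ d > 1 be powers of 2 and m = p_1^{e_1}⋯p_k^{e_k} with each prime p_i ≡ 2d+1 (mod 4d). Then x^n + 1 factors modulo m as the product ∏_{j=0}^{d-1}(x^{n/d} - α_j) for distinct units α_j ∈ ℤ_m*. -/
/-!
Every prime factor `p` of `m` satisfies `2d ∣ p - 1`, so the cyclic group `(ℤ/p^e)ˣ` contains a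
`d`-th root of `-1`, and by the Chinese remainder theorem so does `ℤ/m`. Such a `ζ` has order `2d`,
so the `α_j = ζ^(2j+1)`, `j < d`, are distinct units. Since `α_{j+d/2} = -α_j`, pairing factors gives
`(x - α_j)(x + α_j) = x² - α_j²`, which reduces `∏ (x - ζ^(2j+1)) = x^d + 1` to the same identity for
`ζ²` and `d/2`; substituting `x = X^(n/d)` gives the factorization.
-/

open Polynomial Finset

theorem IsCyclic.exists_pow_eq_of_pow_eq_one {G : Type*} [Group G] [IsCyclic G] [Finite G]
    {u : G} {a k : ℕ} (hu : u ^ a = 1) (h : a * k ∣ Nat.card G) : ∃ x : G, x ^ k = u := by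
  obtain ⟨g, hg⟩ := IsCyclic.exists_monoid_generator (α := G)
  obtain ⟨i, rfl⟩ := Submonoid.mem_powers_iff _ _ |>.mp (hg u)
  obtain ⟨c, hc⟩ := h
  -- writing `u = g ^ i`, `N ∣ a * i` and `N = a * k * c` make `i` a multiple of `k`
  obtain ⟨q, hq⟩ : Nat.card G ∣ a * i := by
    rw [← orderOf_eq_card_of_forall_mem_powers hg]
    exact orderOf_dvd_of_pow_eq_one (by rwa [pow_mul'])
  have ha : a ≠ 0 := by
    rintro rfl
    exact Nat.card_pos.ne' (by simpa using hc)
  refine ⟨g ^ (c * q), ?_⟩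
  rw [← pow_mul, Nat.eq_of_mul_eq_mul_left (Nat.pos_of_ne_zero ha) (hq.trans (by rw [hc]; ring) :
    a * i = a * (c * q * k))]

theorem exists_pow_eq_neg_one_of_two_mul_dvd_card_units {R : Type*} [CommRing R] [IsCyclic Rˣ]
    [Finite Rˣ] {k : ℕ} (h : 2 * k ∣ Nat.card Rˣ) : ∃ ζ : R, ζ ^ k = -1 := by
  obtain ⟨x, hx⟩ := IsCyclic.exists_pow_eq_of_pow_eq_one (u := (-1 : Rˣ)) (by simp) h
  exact ⟨x, by simpa using congrArg Units.val hx⟩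

theorem ZMod.exists_pow_eq_neg_one_of_prime_pow {p k : ℕ} (hp : p.Prime) (h : 2 * k ∣ p - 1)
    (e : ℕ) : ∃ ζ : ZMod (p ^ e), ζ ^ k = -1 := by
  have hp2 : p ≠ 2 := by
    rintro rfl
    have := Nat.eq_one_of_dvd_one h
    omega
  rcases e with _ | e
  · rw [pow_zero]
    exact ⟨0, Subsingleton.elim _ _⟩
  · have := isCyclic_units_of_prime_pow p hp hp2 (e + 1)
    have : NeZero (p ^ (e + 1)) := ⟨pow_ne_zero _ hp.ne_zero⟩
    apply exists_pow_eq_neg_one_of_two_mul_dvd_card_units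
    rw [Nat.card_eq_fintype_card, ZMod.card_units_eq_totient, Nat.totient_prime_pow_succ hp]
    exact h.mul_left _

theorem ZMod.exists_pow_eq_neg_one {m k : ℕ} (hm : m ≠ 0)
    (h : ∀ p ∈ m.primeFactors, 2 * k ∣ p - 1) : ∃ ζ : ZMod m, ζ ^ k = -1 := by
  choose ζ hζ using fun p : m.primeFactors =>
    exists_pow_eq_neg_one_of_prime_pow (Nat.prime_of_mem_primeFactors p.2) (h p p.2)
      (m.factorization p)
  refine ⟨(equivPi m hm).symm ζ, ?_⟩
  rw [← map_pow, show ζ ^ k = -1 from funext hζ, map_neg, map_one]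

theorem two_mul_dvd_sub_one_of_mod_eq {p d : ℕ} (h : p % (4 * d) = (2 * d + 1) % (4 * d)) :
    2 * d ∣ p - 1 := by
  have hdvd : 2 * d ∣ 4 * d := ⟨2, by ring⟩
  apply Nat.dvd_of_mod_eq_zero
  apply Nat.sub_mod_eq_zero_of_mod_eq
  rw [← Nat.mod_mod_of_dvd p hdvd, h, Nat.mod_mod_of_dvd _ hdvd, Nat.add_mod_left]

theorem orderOf_eq_two_pow_succ_of_pow_eq_neg_one {R : Type*} [Ring R] (hR : (-1 : R) ≠ 1)
    {ζ : R} {t : ℕ} (h : ζ ^ 2 ^ t = -1) : orderOf ζ = 2 ^ (t + 1) :=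
  have : Fact (Nat.Prime 2) := ⟨Nat.prime_two⟩
  orderOf_eq_prime_pow (by rwa [h]) (by rw [pow_succ, pow_mul, h, neg_one_sq])

theorem injective_pow_two_mul_add_one {M : Type*} [Monoid M] {ζ : M} {d : ℕ}
    (h : orderOf ζ = 2 * d) : Function.Injective fun j : Fin d => ζ ^ (2 * (j : ℕ) + 1) := by
  intro i j hij
  have hfin : IsOfFinOrder ζ := orderOf_pos_iff.mp (by rw [h]; have := i.pos; omega)
  have hmod := hfin.pow_eq_pow_iff_modEq.mp hij
  rw [h, Nat.ModEq, Nat.mod_eq_of_lt (by omega), Nat.mod_eq_of_lt (by omega)] at hmod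
  exact Fin.ext (by omega)

theorem prod_range_two_pow_sub_pow_odd {A : Type*} [CommRing A] (t : ℕ) :
    ∀ (x ζ : A), ζ ^ 2 ^ t = -1 →
      ∏ j ∈ range (2 ^ t), (x - ζ ^ (2 * j + 1)) = x ^ 2 ^ t + 1 := by
  induction t with
  | zero => intro x ζ h; simp_all
  | succ t ih =>
    intro x ζ h
    have hpair : ∀ j, (x - ζ ^ (2 * j + 1)) * (x - ζ ^ (2 * (2 ^ t + j) + 1))
        = x ^ 2 - (ζ ^ 2) ^ (2 * j + 1) := fun j => by
      linear_combination (-(x - ζ ^ (2 * j + 1)) * ζ ^ (2 * j + 1)) * h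
    rw [pow_succ, mul_two, prod_range_add, ← prod_mul_distrib, prod_congr rfl fun j _ => hpair j,
      ih _ _ (by rw [← pow_mul, two_mul, ← mul_two, ← pow_succ, h]), ← pow_mul, two_mul]

theorem xn_add_one_factors_general {s tt n d m : ℕ}
    (hn : n = 2 ^ s) (hd : d = 2 ^ tt) (hsd : d ≤ n)
    (hm : 2 ≤ m)
    (hprimes : ∀ p ∈ m.primeFactors, p % (4 * d) = (2 * d + 1) % (4 * d)) :
    ∃ α : Fin d → ZMod m,
      Function.Injective α ∧ (∀ j, IsUnit (α j)) ∧
      (X ^ n + 1 : (ZMod m)[X]) = ∏ j : Fin d, (X ^ (n / d) - C (α j)) := by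
  subst hn hd
  have hdvd : ∀ p ∈ m.primeFactors, 2 * 2 ^ tt ∣ p - 1 := fun p hp =>
    two_mul_dvd_sub_one_of_mod_eq (hprimes p hp)
  have : Fact (2 < m) := ⟨hm.lt_of_ne fun h => by
    have := Nat.eq_one_of_dvd_one (hdvd 2 (h ▸ Nat.Prime.mem_primeFactors_self Nat.prime_two))
    have := Nat.one_le_two_pow (n := tt)
    omega⟩
  obtain ⟨ζ, hζ⟩ := ZMod.exists_pow_eq_neg_one (by omega) hdvd
  have horder : orderOf ζ = 2 * 2 ^ tt := by
    rw [orderOf_eq_two_pow_succ_of_pow_eq_neg_one ZMod.neg_one_ne_one hζ, pow_succ']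
  refine ⟨fun j => ζ ^ (2 * (j : ℕ) + 1), injective_pow_two_mul_add_one horder,
    fun j => (orderOf_pos_iff.mp (by rw [horder]; positivity)).isUnit.pow _, ?_⟩
  have hX : (X ^ (2 ^ s / 2 ^ tt) : (ZMod m)[X]) ^ 2 ^ tt = X ^ 2 ^ s := by
    rw [← pow_mul, Nat.div_mul_cancel (Nat.pow_dvd_pow_iff_le_right'.mpr
      ((Nat.pow_le_pow_iff_right (by norm_num)).mp hsd))]
  rw [Fin.prod_univ_eq_prod_range (fun j => X ^ (2 ^ s / 2 ^ tt) - C (ζ ^ (2 * j + 1))),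
    ← hX, ← prod_range_two_pow_sub_pow_odd tt _ (C ζ) (by rw [← map_pow, hζ, map_neg, map_one])]
  simp only [map_pow]

theorem xn_add_one_factors {s tt n d m : ℕ}
    (hn : n = 2 ^ s) (hd : d = 2 ^ tt) (htt : 1 ≤ tt) (hsd : d ≤ n)
    (hm : 2 ≤ m)
    (hprimes : ∀ p ∈ m.primeFactors, p % (4 * d) = (2 * d + 1) % (4 * d)) :
    ∃ α : Fin d → ZMod m,
      Function.Injective α ∧ (∀ j, IsUnit (α j)) ∧
      (X ^ n + 1 : (ZMod m)[X]) = ∏ j : Fin d, (X ^ (n / d) - C (α j)) :=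
  xn_add_one_factors_general hn hd hsd hm hprimes
end
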